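/- Let g, r, d, e, f be integers with 0 ≤ f < e, r − e + f ≥ 0, f·(r+1−e+f) ≥ e and g − d + r ≥ 0. Set s := r+1−e+f, t := e−f, c := e mod s and α₀ := ⌊e/s⌋ + d − r − f − e. Define the sequence γ'_0, …, γ'_r of r+1 integers by: γ'_0 := 0; γ'_j := e for 1 ≤ j ≤ t−1; γ'_j := d − r − α₀ − 1 for t ≤ j ≤ t+c−1; and γ'_j := d − r − α₀ for t+c ≤ j ≤ r. Then the inequality Σ_{j=0}^{r} max{γ'_j + (g−e) − d + r, 0} ≤ g − e holds if and only if: ρ(g, r, d) ≥ f(r+1−e+f) − (g−d+r) in the case g − d + r < e, and ρ(g, r, d) ≥ f(r+1−e+f) − e in the case g − d + r ≥ e. -/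

import Mathlib

/-- The Brill–Noether number `ρ(g, r, d) = g - (r+1)(g-d+r)`. -/
def rho (g r d : ℤ) : ℤ := g - (r + 1) * (g - d + r)

/-!
On the blocks `[1, t)`, `[t, t + c)` and `[t + c, r]` where `γ'` is constant, the summands are
`g - d + r`, `g - d + r + f - ⌊e/s⌋ - 1` and `g - d + r + f - ⌊e/s⌋`. They are nonnegative because
`f s ≥ e` forces `⌊e/s⌋ ≤ f`, strictly when `c = e mod s > 0`. Since `e = s ⌊e/s⌋ + c` and the
last two blocks have `s` terms in total, the blocks add up to `r (g - d + r) + f s - e`; only the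
term `max (g - d + r - e) 0` at `j = 0` depends on the case distinction.
-/

open Finset

theorem sum_Ico_consecutive_of_le {α M : Type*} [LinearOrder α] [LocallyFiniteOrder α]
    [AddCommMonoid M] (F : α → M) {a b c : α} (hab : a ≤ b) (hbc : b ≤ c) :
    ∑ i ∈ Ico a b, F i + ∑ i ∈ Ico b c, F i = ∑ i ∈ Ico a c, F i := by
  rw [← sum_union (Ico_disjoint_Ico_consecutive a b c), Ico_union_Ico_eq_Ico hab hbc]

theorem Int.sum_Ico_eq_zsmul_of_forall_eq {M : Type*} [AddCommGroup M] {F : ℤ → M} {a b : ℤ}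
    (hab : a ≤ b) {v : M} (hF : ∀ j, a ≤ j → j < b → F j = v) :
    ∑ j ∈ Ico a b, F j = (b - a) • v := by
  rw [sum_congr rfl fun j hj => hF j (mem_Ico.1 hj).1 (mem_Ico.1 hj).2, sum_const,
    Int.card_Ico, ← natCast_zsmul, Int.toNat_of_nonneg (sub_nonneg.2 hab)]

theorem Int.sum_Icc_zero_eq_of_three_blocks {M : Type*} [AddCommGroup M] (F : ℤ → M)
    {r t c : ℤ} (ht : 1 ≤ t) (hc : 0 ≤ c) (htc : t + c ≤ r + 1) {u v w : M}
    (hu : ∀ j, 1 ≤ j → j < t → F j = u) (hv : ∀ j, t ≤ j → j < t + c → F j = v)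
    (hw : ∀ j, t + c ≤ j → j < r + 1 → F j = w) :
    ∑ j ∈ Icc 0 r, F j = F 0 + (t - 1) • u + c • v + (r + 1 - t - c) • w := by
  have hzero : ∑ j ∈ Ico (0 : ℤ) 1, F j = F 0 := by
    rw [← zero_add (1 : ℤ), Ico_add_one_right_eq_Icc, Icc_self, sum_singleton]
  rw [← Ico_add_one_right_eq_Icc, ← sum_Ico_consecutive_of_le F (b := t + c) (by omega) htc,
    ← sum_Ico_consecutive_of_le F (b := t) (by omega) (le_add_of_nonneg_right hc),
    ← sum_Ico_consecutive_of_le F zero_le_one ht, hzero,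
    Int.sum_Ico_eq_zsmul_of_forall_eq ht hu,
    Int.sum_Ico_eq_zsmul_of_forall_eq (le_add_of_nonneg_right hc) hv,
    Int.sum_Ico_eq_zsmul_of_forall_eq htc hw, add_sub_cancel_left]
  simp only [sub_sub, add_assoc]

theorem Int.ediv_lt_of_le_mul_of_emod_pos {a b c : ℤ} (hc : 0 < c) (h : a ≤ b * c)
    (hmod : 0 < a % c) : a / c < b :=
  Int.ediv_lt_of_lt_mul hc <| h.lt_of_ne fun heq => by simp [heq] at hmod

theorem max_add_le_iff_rho_ge (g r d e N : ℤ) :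
    max (g - d + r - e) 0 + (r * (g - d + r) + N - e) ≤ g - e ↔
      if g - d + r < e then rho g r d ≥ N - (g - d + r) else rho g r d ≥ N - e := by
  unfold rho
  split_ifs with hlt
  · rw [max_eq_right (by linarith)]
    constructor <;> intro h <;> linarith
  · rw [max_eq_left (by linarith)]
    constructor <;> intro h <;> linarith

theorem eisenbud_harris_condition_gamma'_general (g r d e f s t c α₀ : ℤ)
    (hfe : f < e) (href : 0 ≤ r - e + f)
    (hfs : f * (r + 1 - e + f) ≥ e) (hgdr : 0 ≤ g - d + r)
    (hs : s = r + 1 - e + f) (ht : t = e - f) (hc : c = e % s)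
    (hα₀ : α₀ = e / s + d - r - f - e)
    (γ' : ℤ → ℤ)
    (hγ0 : γ' 0 = 0)
    (hγ1 : ∀ j, 1 ≤ j → j ≤ t - 1 → γ' j = e)
    (hγ2 : ∀ j, t ≤ j → j ≤ t + c - 1 → γ' j = d - r - α₀ - 1)
    (hγ3 : ∀ j, t + c ≤ j → j ≤ r → γ' j = d - r - α₀) :
    (∑ j ∈ Finset.Icc (0 : ℤ) r, max (γ' j + (g - e) - d + r) 0 ≤ g - e) ↔
      (if g - d + r < e then rho g r d ≥ f * (r + 1 - e + f) - (g - d + r)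
        else rho g r d ≥ f * (r + 1 - e + f) - e) := by
  set q := e / s
  have hs_pos : 0 < s := by omega
  have hc_nonneg : 0 ≤ c := hc ▸ Int.emod_nonneg e hs_pos.ne'
  have hc_lt : c < s := hc ▸ Int.emod_lt_of_pos e hs_pos
  have hdiv : s * q + c = e := hc ▸ Int.mul_ediv_add_emod e s
  have he_le : e ≤ f * s := hs ▸ hfs
  have hq_le : q ≤ f := Int.ediv_le_of_le_mul hs_pos he_le
  have hq_lt : 0 < c → q < f := fun hc_pos =>
    Int.ediv_lt_of_le_mul_of_emod_pos hs_pos he_le (hc ▸ hc_pos)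
  have hsum : ∑ j ∈ Icc 0 r, max (γ' j + (g - e) - d + r) 0
      = max (g - d + r - e) 0 + (r * (g - d + r) + f * s - e) := by
    rw [Int.sum_Icc_zero_eq_of_three_blocks _ (t := t) (c := c) (by omega) hc_nonneg (by omega)
      (u := g - d + r) (v := g - d + r + f - q - 1) (w := g - d + r + f - q)]
    · rw [hγ0, show (0 : ℤ) + (g - e) - d + r = g - d + r - e by ring]
      simp only [smul_eq_mul]
      linear_combination (q - f) * ht + (q - f) * hs - hdiv
    · intro j hj₁ hjt
      rw [hγ1 j hj₁ (by omega), max_eq_left] <;> linarith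
    · intro j htj hjc
      have := hq_lt (by omega)
      rw [hγ2 j htj (by omega), hα₀, max_eq_left] <;> linarith
    · intro j hcj hjr
      rw [hγ3 j hcj (by omega), hα₀, max_eq_left] <;> linarith
  rw [hsum, hs]
  exact max_add_le_iff_rho_ge g r d e _

/-- Numerical equivalence from the Remark after (3.7) in Section 3: the
Eisenbud–Harris condition for the ramification sequence `γ'` on the genus
`g - e` component holds if and only if `ρ(g,r,d) ≥ f(r+1-e+f) - (g-d+r)` when
`g-d+r < e`, and `ρ(g,r,d) ≥ f(r+1-e+f) - e` when `g-d+r ≥ e`. -/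
theorem eisenbud_harris_condition_gamma' (g r d e f s t c α₀ : ℤ)
    (hf : 0 ≤ f) (hfe : f < e) (href : 0 ≤ r - e + f)
    (hfs : f * (r + 1 - e + f) ≥ e) (hgdr : 0 ≤ g - d + r)
    (hs : s = r + 1 - e + f) (ht : t = e - f) (hc : c = e % s)
    (hα₀ : α₀ = e / s + d - r - f - e)
    (γ' : ℤ → ℤ)
    (hγ0 : γ' 0 = 0)
    (hγ1 : ∀ j, 1 ≤ j → j ≤ t - 1 → γ' j = e)
    (hγ2 : ∀ j, t ≤ j → j ≤ t + c - 1 → γ' j = d - r - α₀ - 1)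
    (hγ3 : ∀ j, t + c ≤ j → j ≤ r → γ' j = d - r - α₀) :
    (∑ j ∈ Finset.Icc (0 : ℤ) r, max (γ' j + (g - e) - d + r) 0 ≤ g - e) ↔
      (if g - d + r < e then rho g r d ≥ f * (r + 1 - e + f) - (g - d + r)
        else rho g r d ≥ f * (r + 1 - e + f) - e) :=
  eisenbud_harris_condition_gamma'_general g r d e f s t c α₀ hfe href hfs hgdr hs ht hc hα₀ γ' hγ0
    hγ1 hγ2 hγ3
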